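/- Let k ≥ 2 and let x and y be binary strings of the same length satisfying B^(k−1)(x) = B^(k−1)(y), B_L^(k−1)(x) = B_L^(k−1)(y), B_R^(k−1)(x) = B_R^(k−1)(y), and B_LR^(k−1)(x) = B_LR^(k−1)(y). Then B^(k)((x, 0, 0, y)) = B^(k)((y, 0, 0, x)), where (x, 0, 0, y) denotes the concatenation of x, two 0 bits, and y. -/

import Mathlib

/-- The multiset of all `s`-gapped subsequences of a binary string (all lengths,
including the empty subsequence), counted with multiplicity over index choices:
consecutive chosen indices must differ by at least `s`. -/
def gappedSubseqs (s : ℕ) : List Bool → Multiset (List Bool)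
  | [] => {[]}
  | a :: l => gappedSubseqs s l + (gappedSubseqs s (l.drop (s - 1))).map (a :: ·)
termination_by x => x.length
decreasing_by
  · simp
  · simp only [List.length_drop, List.length_cons]; omega

/-- The `s`-gapped `k`-deck: all `s`-gapped subsequences of length between 1 and `k`. -/
def gDeck (s k : ℕ) (x : List Bool) : Multiset (List Bool) :=
  (gappedSubseqs s x).filter (fun w => 1 ≤ w.length ∧ w.length ≤ k)

/-- The exact `s`-gapped `k`-deck: all `s`-gapped subsequences of length exactly `k`. -/
def dDeck (s k : ℕ) (x : List Bool) : Multiset (List Bool) :=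
  (gappedSubseqs s x).filter (fun w => w.length = k)

/-- The classical (ungapped) `k`-deck: the multiset of all length-`k` subsequences. -/
def deck (k : ℕ) (x : List Bool) : Multiset (List Bool) :=
  (gappedSubseqs 1 x).filter (fun w => w.length = k)

/-- The gapped `k`-deck `B^(k)` (gap `2`). -/
def Bdeck (k : ℕ) (x : List Bool) : Multiset (List Bool) := gDeck 2 k x

/-- `B_L^(k)`: the gapped `k`-deck of the string punctured on the left. -/
def BLdeck (k : ℕ) (x : List Bool) : Multiset (List Bool) := Bdeck k x.tail

/-- `B_R^(k)`: the gapped `k`-deck of the string punctured on the right. -/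
def BRdeck (k : ℕ) (x : List Bool) : Multiset (List Bool) := Bdeck k x.dropLast

/-- `B_LR^(k)`: the gapped `k`-deck of the string punctured on both ends. -/
def BLRdeck (k : ℕ) (x : List Bool) : Multiset (List Bool) := Bdeck k x.tail.dropLast

/-- `S(k)`: the smallest positive `n` such that two distinct binary strings of
length `n` share the same `k`-deck. -/
noncomputable def Sval (k : ℕ) : ℕ :=
  sInf {n | 0 < n ∧ ∃ x y : List Bool, x.length = n ∧ y.length = n ∧ x ≠ y ∧
    deck k x = deck k y}

/-- `G(k)`: the smallest positive `n` such that two distinct binary strings of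
length `n` share the same gapped `k`-deck. -/
noncomputable def Gval (k : ℕ) : ℕ :=
  sInf {n | 0 < n ∧ ∃ x y : List Bool, x.length = n ∧ y.length = n ∧ x ≠ y ∧
    Bdeck k x = Bdeck k y}

/-- `G_s(k)`: the smallest positive `n` such that two distinct binary strings of
length `n` share the same `s`-gapped `k`-deck. -/
noncomputable def Gs (s k : ℕ) : ℕ :=
  sInf {n | 0 < n ∧ ∃ x y : List Bool, x.length = n ∧ y.length = n ∧ x ≠ y ∧
    gDeck s k x = gDeck s k y}

/-- `G*(k)`: the smallest positive `n` such that two distinct binary strings of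
length `n` share the same gapped `k`-deck, also after puncturing on the left,
right and both sides. -/
noncomputable def Gstar (k : ℕ) : ℕ :=
  sInf {n | 0 < n ∧ ∃ x y : List Bool, x.length = n ∧ y.length = n ∧ x ≠ y ∧
    Bdeck k x = Bdeck k y ∧ BLdeck k x = BLdeck k y ∧
    BRdeck k x = BRdeck k y ∧ BLRdeck k x = BLRdeck k y}

mutual
/-- Morse-Thue string `x^(k+1)` (index shifted: `mtX 0 = x^(1) = (0,1)`). -/
def mtX : ℕ → List Bool
  | 0 => [false, true]
  | k + 1 => mtX k ++ mtY k
/-- Morse-Thue string `y^(k+1)` (index shifted: `mtY 0 = y^(1) = (1,0)`). -/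
def mtY : ℕ → List Bool
  | 0 => [true, false]
  | k + 1 => mtY k ++ mtX k
end

mutual
/-- Padded Morse-Thue string `x^(k+1)` (index shifted: `px 0 = x^(1) = (0,0,1,0)`). -/
def px : ℕ → List Bool
  | 0 => [false, false, true, false]
  | k + 1 => [false] ++ px k ++ [false, false] ++ py k ++ [false]
/-- Padded Morse-Thue string `y^(k+1)` (index shifted: `py 0 = y^(1) = (0,1,0,0)`). -/
def py : ℕ → List Bool
  | 0 => [false, true, false, false]
  | k + 1 => [false] ++ py k ++ [false, false] ++ px k ++ [false]
end

/-- Interleaving `(z₁,x₁,z₂,x₂,…,z_{k-1},x_{k-1},z_k)` of `z` and `x`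
(used with `|z| = |x| + 1`). -/
def interleave : List Bool → List Bool → List Bool
  | z, [] => z
  | [], _ :: _ => []
  | a :: l, b :: m => a :: b :: interleave l m

/-- `N(w, p)`: the number of occurrences of the wildcard string `w`
(entries `none` are wildcards `J`, `some b` is a letter of `Γ = {X, Y}`)
as a subsequence of `p`, each wildcard matching either letter. -/
def Nw : List (Option Bool) → List Bool → ℕ
  | [], _ => 1
  | _ :: _, [] => 0
  | a :: w, b :: p =>
      Nw (a :: w) p + if a = none ∨ a = some b then Nw w p else 0

/-- `U_r(k)`: wildcard strings of length between `r` and `k` with exactly `r`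
non-wildcard symbols. -/
def Ur (r k : ℕ) : Set (List (Option Bool)) :=
  {w | r ≤ w.length ∧ w.length ≤ k ∧ w.countP (fun a => a.isSome) = r}

/-- `U(k₁, k₂) = U₁(k₁) ∪ U₂(k₂)`. -/
def Uset (k1 k2 : ℕ) : Set (List (Option Bool)) := Ur 1 k1 ∪ Ur 2 k2

/-- `p ∼^{U(k₁,k₂)} q`: `N(w,p) = N(w,q)` for all `w ∈ U(k₁,k₂)`. -/
def equivU (k1 k2 : ℕ) (p q : List Bool) : Prop :=
  ∀ w ∈ Uset k1 k2, Nw w p = Nw w q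

/-- `S_U(k₁,k₂)`: the smallest `m` for which two distinct strings
`p, q ∈ Γ^m` satisfy `p ∼^{U(k₁,k₂)} q`. -/
noncomputable def SU (k1 k2 : ℕ) : ℕ :=
  sInf {m | ∃ p q : List Bool, p.length = m ∧ q.length = m ∧ p ≠ q ∧
    equivU k1 k2 p q}

/-- `h_{x,y}(p)`: replace each letter of `p` (`false = X`, `true = Y`) by `x`
resp. `y` padded with one `0` at each end. -/
def hxy (x y : List Bool) (p : List Bool) : List Bool :=
  (p.map (fun b => [false] ++ (if b then y else x) ++ [false])).flatten

namespace S6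
open Multiset

abbrev G (l : List Bool) : Multiset (List Bool) := gappedSubseqs 2 l

def mpr (M N : Multiset (List Bool)) : Multiset (List Bool) := M.bind fun w => N.map (w ++ ·)

lemma G_nil : G [] = {[]} := by
  show gappedSubseqs 2 [] = {[]}
  rw [gappedSubseqs.eq_def]

lemma G_cons (a : Bool) (l : List Bool) :
    G (a :: l) = G l + (G l.tail).map (a :: ·) := by
  show gappedSubseqs 2 (a :: l) = gappedSubseqs 2 l + (gappedSubseqs 2 l.tail).map (a :: ·)
  rw [gappedSubseqs.eq_def]
  simp [List.drop_one]

lemma mpr_add_left (M M' N : Multiset (List Bool)) :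
    mpr (M + M') N = mpr M N + mpr M' N := by simp [mpr]

lemma mpr_add_right (M N N' : Multiset (List Bool)) :
    mpr M (N + N') = mpr M N + mpr M N' := by
  simp only [mpr, Multiset.map_add]
  exact Multiset.bind_add ..

lemma mpr_one_left (N : Multiset (List Bool)) : mpr {[]} N = N := by
  simp [mpr]

lemma mpr_one_right (M : Multiset (List Bool)) : mpr M {[]} = M := by
  simp only [mpr, Multiset.map_singleton, List.append_nil]
  simpa using M.bind_singleton id

lemma mpr_map_left (a : Bool) (M N : Multiset (List Bool)) :
    mpr (M.map (a :: ·)) N = (mpr M N).map (a :: ·) := by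
  simp [mpr, Multiset.bind_map, Multiset.map_bind]

lemma mpr_single_right (M : Multiset (List Bool)) (v : List Bool) :
    mpr M {v} = M.map (· ++ v) := by
  simp only [mpr, Multiset.map_singleton]
  exact M.bind_singleton _

lemma mpr_single_left (a : Bool) (N : Multiset (List Bool)) :
    mpr {[a]} N = N.map (a :: ·) := by
  simp [mpr]


lemma tail_dropLast (b : Bool) (u : List Bool) :
    (b :: u).dropLast.tail = u.dropLast := by
  cases u <;> simp

lemma splitA : ∀ (n : ℕ) (u : List Bool), u.length ≤ n → ∀ v : List Bool,
    G (u ++ v) + mpr (G u.dropLast) (G v.tail)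
      = mpr (G u.dropLast) (G v) + mpr (G u) (G v.tail) := by
  intro n
  induction n with
  | zero =>
    intro u hu v
    have : u = [] := List.eq_nil_of_length_eq_zero (Nat.le_zero.mp hu)
    subst this
    simp [G_nil, mpr_one_left]
  | succ n ih =>
    intro u hu v
    match u with
    | [] => simp [G_nil, mpr_one_left]
    | [a] =>
      rw [List.dropLast_singleton]
      rw [show ([a] : List Bool) ++ v = a :: v from rfl]
      rw [G_cons a v, G_cons a [], G_nil]
      simp only [List.tail_nil, G_nil, mpr_one_left, mpr_add_left, mpr_single_left,
        Multiset.map_singleton]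
      abel
    | a :: b :: u'' =>
      have h1 : (b :: u'').length ≤ n := by simp at hu ⊢; omega
      have h2 : u''.length ≤ n := by simp at hu ⊢; omega
      have ih1 := ih (b :: u'') h1 v
      have ih2 := congrArg (Multiset.map (a :: ·)) (ih u'' h2 v)
      simp only [Multiset.map_add] at ih2
      have e1 : (a :: b :: u'') ++ v = a :: ((b :: u'') ++ v) := rfl
      rw [e1, G_cons a ((b :: u'') ++ v)]
      have e2 : ((b :: u'') ++ v).tail = u'' ++ v := rfl
      rw [e2]
      have e3 : (a :: b :: u'').dropLast = a :: (b :: u'').dropLast := by simp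
      rw [e3, G_cons a ((b :: u'').dropLast), tail_dropLast]
      rw [G_cons a (b :: u'')]
      have e4 : (b :: u'').tail = u'' := rfl
      rw [e4]
      simp only [mpr_add_left, mpr_map_left]
      ext w
      have c1 := congrArg (Multiset.count w) ih1
      have c2 := congrArg (Multiset.count w) ih2
      simp only [Multiset.count_add] at c1 c2 ⊢
      omega


lemma key (a b : List Bool) :
    G (a ++ [false, false] ++ b)
      = mpr (G a) (G b) + mpr (G a) ((G b.tail).map (false :: ·))
        + mpr (G a.dropLast) ((G b).map (false :: ·)) := by
  have e : a ++ [false, false] ++ b = a ++ (false :: false :: b) := by simp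
  rw [e]
  have hA := splitA a.length a le_rfl (false :: false :: b)
  rw [show (false :: false :: b).tail = false :: b from rfl] at hA
  rw [G_cons false (false :: b), show (false :: b).tail = b from rfl] at hA
  rw [G_cons false b, show List.tail b = b.tail from rfl] at hA
  simp only [mpr_add_right] at hA
  ext w
  have c := congrArg (Multiset.count w) hA
  simp only [Multiset.count_add] at c ⊢
  omega

lemma filterNot_G : ∀ (n : ℕ) (l : List Bool), l.length ≤ n →
    (G l).filter (fun w => ¬ 1 ≤ w.length) = {[]} := by
  intro n
  induction n with
  | zero =>
    intro l hl
    have : l = [] := List.eq_nil_of_length_eq_zero (Nat.le_zero.mp hl)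
    subst this
    rw [G_nil]
    simp [Multiset.filter_singleton]
  | succ n ih =>
    intro l hl
    match l with
    | [] => rw [G_nil]; simp [Multiset.filter_singleton]
    | a :: l' =>
      rw [G_cons, Multiset.filter_add, ih l' (by simp at hl; omega)]
      rw [Multiset.filter_map]
      rw [show (Multiset.filter ((fun w => ¬1 ≤ w.length) ∘ (fun x => a :: x)) (G l'.tail)) = 0
        from Multiset.filter_eq_nil.mpr (by intro w _; simp)]
      simp

lemma G_split (l : List Bool) :
    G l = (G l).filter (fun w => 1 ≤ w.length) + {[]} := by
  conv_lhs => rw [← Multiset.filter_add_not (fun w => 1 ≤ w.length) (G l)]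
  rw [filterNot_G l.length l le_rfl]


lemma filter_p_map_cons (m : ℕ) (M : Multiset (List Bool)) :
    (M.map (false :: ·)).filter (fun w => 1 ≤ w.length ∧ w.length ≤ m + 1)
      = (M.filter (fun w => w.length ≤ m)).map (false :: ·) := by
  rw [Multiset.filter_map]
  congr 1
  apply Multiset.filter_congr
  intro w _
  simp only [Function.comp_apply, List.length_cons]
  omega

lemma filter_q_map_cons (m : ℕ) (M : Multiset (List Bool)) :
    (M.map (false :: ·)).filter (fun w => w.length ≤ m)
      = (M.filter (fun w => w.length + 1 ≤ m)).map (false :: ·) := by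
  rw [Multiset.filter_map]
  congr 1

lemma filter_p_map_snoc (m : ℕ) (M : Multiset (List Bool)) :
    (M.map (· ++ [false])).filter (fun w => 1 ≤ w.length ∧ w.length ≤ m + 1)
      = (M.filter (fun w => w.length ≤ m)).map (· ++ [false]) := by
  rw [Multiset.filter_map]
  congr 1
  apply Multiset.filter_congr
  intro w _
  simp only [Function.comp_apply, List.length_append, List.length_singleton]
  omega

lemma filter_p_mpr_zero_left (m : ℕ) (M N : Multiset (List Bool))
    (hM : ∀ w ∈ M, ¬ w.length ≤ m) (hN : ∀ w ∈ N, 1 ≤ w.length) :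
    (mpr M N).filter (fun w => 1 ≤ w.length ∧ w.length ≤ m + 1) = 0 := by
  apply Multiset.filter_eq_nil.mpr
  intro w hw
  simp only [mpr, Multiset.mem_bind, Multiset.mem_map] at hw
  obtain ⟨w1, hw1, w2, hw2, rfl⟩ := hw
  have := hM w1 hw1
  have := hN w2 hw2
  simp only [List.length_append, not_and, not_le]
  omega

lemma filter_p_mpr_zero_right (m : ℕ) (M N : Multiset (List Bool))
    (hM : ∀ w ∈ M, 1 ≤ w.length) (hN : ∀ w ∈ N, ¬ w.length ≤ m) :
    (mpr M N).filter (fun w => 1 ≤ w.length ∧ w.length ≤ m + 1) = 0 := by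
  apply Multiset.filter_eq_nil.mpr
  intro w hw
  simp only [mpr, Multiset.mem_bind, Multiset.mem_map] at hw
  obtain ⟨w1, hw1, w2, hw2, rfl⟩ := hw
  have := hM w1 hw1
  have := hN w2 hw2
  simp only [List.length_append, not_and, not_le]
  omega

lemma filter_p_mpr_trunc (m : ℕ) (M N : Multiset (List Bool))
    (hM : ∀ w ∈ M, 1 ≤ w.length) (hN : ∀ w ∈ N, 1 ≤ w.length) :
    (mpr M N).filter (fun w => 1 ≤ w.length ∧ w.length ≤ m + 1)
      = (mpr (M.filter (fun w => w.length ≤ m)) (N.filter (fun w => w.length ≤ m))).filter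
          (fun w => 1 ≤ w.length ∧ w.length ≤ m + 1) := by
  conv_lhs => rw [← Multiset.filter_add_not (fun w => w.length ≤ m) M,
    ← Multiset.filter_add_not (fun w => w.length ≤ m) N]
  rw [mpr_add_left, mpr_add_right, mpr_add_right, Multiset.filter_add,
    Multiset.filter_add, Multiset.filter_add]
  rw [filter_p_mpr_zero_left m _ _ (fun w hw => (Multiset.mem_filter.mp hw).2)
      (fun w hw => hN w (Multiset.mem_filter.mp hw).1)]
  rw [filter_p_mpr_zero_right m _ _ (fun w hw => hM w (Multiset.mem_filter.mp hw).1)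
      (fun w hw => (Multiset.mem_filter.mp hw).2)]
  rw [filter_p_mpr_zero_left m _ _ (fun w hw => (Multiset.mem_filter.mp hw).2)
      (fun w hw => hN w (Multiset.mem_filter.mp hw).1)]
  simp

lemma refilter_pos (m : ℕ) (s : Multiset (List Bool)) :
    (s.filter (fun w => 1 ≤ w.length)).filter (fun w => 1 ≤ w.length ∧ w.length ≤ m + 1)
      = s.filter (fun w => 1 ≤ w.length ∧ w.length ≤ m + 1) := by
  rw [Multiset.filter_filter]
  apply Multiset.filter_congr
  intro w _
  omega

lemma refilter_q (m : ℕ) (s : Multiset (List Bool)) :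
    (s.filter (fun w => 1 ≤ w.length)).filter (fun w => w.length ≤ m)
      = s.filter (fun w => 1 ≤ w.length ∧ w.length ≤ m) := by
  rw [Multiset.filter_filter]
  apply Multiset.filter_congr
  intro w _
  omega

lemma refilter_r (m : ℕ) (s : Multiset (List Bool)) :
    (s.filter (fun w => 1 ≤ w.length)).filter (fun w => w.length + 1 ≤ m)
      = (s.filter (fun w => 1 ≤ w.length ∧ w.length ≤ m)).filter
          (fun w => w.length + 1 ≤ m) := by
  rw [Multiset.filter_filter, Multiset.filter_filter]
  apply Multiset.filter_congr
  intro w _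
  omega


lemma pos_of_mem_filter_pos (s : Multiset (List Bool)) :
    ∀ w ∈ s.filter (fun w => 1 ≤ w.length), 1 ≤ w.length :=
  fun _ hw => (Multiset.mem_filter.mp hw).2

lemma pos_of_mem_map_cons (s : Multiset (List Bool)) :
    ∀ w ∈ s.map (false :: ·), 1 ≤ w.length := by
  intro w hw
  obtain ⟨w', _, rfl⟩ := Multiset.mem_map.mp hw
  simp

lemma term1 (m : ℕ) (a b : List Bool) :
    (mpr (G a) (G b)).filter (fun w => 1 ≤ w.length ∧ w.length ≤ m + 1)
      = (G a).filter (fun w => 1 ≤ w.length ∧ w.length ≤ m + 1)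
        + (G b).filter (fun w => 1 ≤ w.length ∧ w.length ≤ m + 1)
        + (mpr ((G a).filter (fun w => 1 ≤ w.length ∧ w.length ≤ m))
            ((G b).filter (fun w => 1 ≤ w.length ∧ w.length ≤ m))).filter
            (fun w => 1 ≤ w.length ∧ w.length ≤ m + 1) := by
  conv_lhs => rw [G_split a, G_split b]
  rw [mpr_add_left, mpr_one_left, mpr_add_right, mpr_one_right]
  rw [Multiset.filter_add, Multiset.filter_add, Multiset.filter_add]
  rw [show Multiset.filter (fun w => 1 ≤ w.length ∧ w.length ≤ m + 1) {[]} = 0 from by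
    rw [Multiset.filter_singleton]; simp]
  rw [refilter_pos, refilter_pos]
  rw [filter_p_mpr_trunc m _ _ (pos_of_mem_filter_pos _) (pos_of_mem_filter_pos _)]
  rw [refilter_q, refilter_q]
  abel

lemma term2 (m : ℕ) (a c : List Bool) :
    (mpr (G a) ((G c).map (false :: ·))).filter (fun w => 1 ≤ w.length ∧ w.length ≤ m + 1)
      = {[false]}
        + ((G c).filter (fun w => 1 ≤ w.length ∧ w.length ≤ m)).map (false :: ·)
        + ((G a).filter (fun w => 1 ≤ w.length ∧ w.length ≤ m)).map (· ++ [false])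
        + (mpr ((G a).filter (fun w => 1 ≤ w.length ∧ w.length ≤ m))
            ((((G c).filter (fun w => 1 ≤ w.length ∧ w.length ≤ m)).filter
              (fun w => w.length + 1 ≤ m)).map (false :: ·))).filter
            (fun w => 1 ≤ w.length ∧ w.length ≤ m + 1) := by
  conv_lhs => rw [G_split a, G_split c]
  rw [Multiset.map_add]
  rw [show Multiset.map (false :: ·) {([] : List Bool)} = {[false]} from by
    rw [Multiset.map_singleton]]
  rw [mpr_add_left, mpr_one_left, mpr_add_right, mpr_single_right]
  rw [Multiset.filter_add, Multiset.filter_add, Multiset.filter_add]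
  rw [show Multiset.filter (fun w => 1 ≤ w.length ∧ w.length ≤ m + 1)
    ({[false]} : Multiset (List Bool)) = {[false]} from by
    rw [Multiset.filter_singleton]; simp]
  rw [filter_p_map_cons, refilter_q]
  rw [filter_p_map_snoc, refilter_q]
  rw [filter_p_mpr_trunc m _ _ (pos_of_mem_filter_pos _) (pos_of_mem_map_cons _)]
  rw [refilter_q, filter_q_map_cons, refilter_r]
  abel

lemma main2 (m : ℕ) (a b : List Bool) :
    (G (a ++ [false, false] ++ b)).filter (fun w => 1 ≤ w.length ∧ w.length ≤ m + 1)
      = (G a).filter (fun w => 1 ≤ w.length ∧ w.length ≤ m + 1)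
        + (G b).filter (fun w => 1 ≤ w.length ∧ w.length ≤ m + 1)
        + (mpr ((G a).filter (fun w => 1 ≤ w.length ∧ w.length ≤ m))
            ((G b).filter (fun w => 1 ≤ w.length ∧ w.length ≤ m))).filter
            (fun w => 1 ≤ w.length ∧ w.length ≤ m + 1)
        + ({[false]}
          + ((G b.tail).filter (fun w => 1 ≤ w.length ∧ w.length ≤ m)).map (false :: ·)
          + ((G a).filter (fun w => 1 ≤ w.length ∧ w.length ≤ m)).map (· ++ [false])
          + (mpr ((G a).filter (fun w => 1 ≤ w.length ∧ w.length ≤ m))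
              ((((G b.tail).filter (fun w => 1 ≤ w.length ∧ w.length ≤ m)).filter
                (fun w => w.length + 1 ≤ m)).map (false :: ·))).filter
              (fun w => 1 ≤ w.length ∧ w.length ≤ m + 1))
        + ({[false]}
          + ((G b).filter (fun w => 1 ≤ w.length ∧ w.length ≤ m)).map (false :: ·)
          + ((G a.dropLast).filter (fun w => 1 ≤ w.length ∧ w.length ≤ m)).map (· ++ [false])
          + (mpr ((G a.dropLast).filter (fun w => 1 ≤ w.length ∧ w.length ≤ m))
              ((((G b).filter (fun w => 1 ≤ w.length ∧ w.length ≤ m)).filter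
                (fun w => w.length + 1 ≤ m)).map (false :: ·))).filter
              (fun w => 1 ≤ w.length ∧ w.length ≤ m + 1)) := by
  rw [key, Multiset.filter_add, Multiset.filter_add, term1, term2 m a b.tail,
    term2 m a.dropLast b]

end S6

/-- Under the inductive hypotheses at level `k-1`,
`B^(k)((x,0,0,y)) = B^(k)((y,0,0,x))`. -/
theorem stmt6 (k n : ℕ) (hk : 2 ≤ k) (x y : List Bool)
    (hx : x.length = n) (hy : y.length = n)
    (hB : Bdeck (k - 1) x = Bdeck (k - 1) y)
    (hL : BLdeck (k - 1) x = BLdeck (k - 1) y)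
    (hR : BRdeck (k - 1) x = BRdeck (k - 1) y)
    (hLR : BLRdeck (k - 1) x = BLRdeck (k - 1) y) :
    Bdeck k (x ++ [false, false] ++ y) = Bdeck k (y ++ [false, false] ++ x) := by
  obtain ⟨m, rfl⟩ : ∃ m, k = m + 1 := ⟨k - 1, by omega⟩
  simp only [Nat.add_sub_cancel] at hB hL hR
  simp only [Bdeck, BLdeck, BRdeck, gDeck] at hB hL hR ⊢
  rw [S6.main2 m x y, S6.main2 m y x, hB, hL, hR]
  abel
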